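/- Fix R > 0 and λ ∈ ℝ. Let u : ℝ³ → ℝ be C² on an open neighborhood of the cube Q = [0,R]³, satisfy Δu + λ²u = 0 on Q, and vanish on the boundary ∂Q. Then for every x ∈ ℝ³ outside the closed cube [0,R]³, the boundary integral vanishes: ∫_{∂Q} Φ_λ(|x−z|) · (∂u/∂n)(z) ds(z) = 0, i.e. the sum over i = 1,2,3 of ∫_{[0,R]²} cos(λ|x−z|)/(4π|x−z|) · ∂u/∂zᵢ(z) dA(z) over the face {zᵢ = R} minus the same integral over the face {zᵢ = 0} equals 0. -/

import Mathlib

open MeasureTheory Real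

noncomputable section

/-- `ℝ³` as a Euclidean space. -/
abbrev E3 := EuclideanSpace ℝ (Fin 3)

/-- The Laplacian `Δu = ∂²u/∂x₁² + ∂²u/∂x₂² + ∂²u/∂x₃²`. -/
def lap (u : E3 → ℝ) (x : E3) : ℝ :=
  ∑ i : Fin 3,
    fderiv ℝ (fun y => fderiv ℝ u y (EuclideanSpace.single i 1)) x (EuclideanSpace.single i 1)

/-- Spherical integrals `g(z,r) = r² ∫_{S²} h(z + r·t) dσ₁(t)`, with `σ₁` the 2-dimensional
Hausdorff (surface) measure on the unit sphere `S² ⊂ ℝ³`. -/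
def sphInt (h : E3 → ℝ) (z : E3) (r : ℝ) : ℝ :=
  r ^ 2 * ∫ t in Metric.sphere (0 : E3) 1, h (z + r • t) ∂μH[2]

/-- The point on the face `{zᵢ = c}` of a cube whose remaining two coordinates are `p`. -/
def facePt (i : Fin 3) (c : ℝ) (p : ℝ × ℝ) : E3 :=
  c • EuclideanSpace.single i 1 + p.1 • EuclideanSpace.single (i + 1) 1 +
    p.2 • EuclideanSpace.single (i + 2) 1

/-- The closed cube `Q = [0,R]³`. -/
def cube (R : ℝ) : Set E3 := {x | ∀ i, x i ∈ Set.Icc 0 R}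

/-- The open cube `(0,R)³`. -/
def cubeO (R : ℝ) : Set E3 := {x | ∀ i, x i ∈ Set.Ioo 0 R}

/-- The boundary `∂Q` of the cube `[0,R]³`: points of the cube with some coordinate `0` or `R`. -/
def cubeBdry (R : ℝ) : Set E3 := {x ∈ cube R | ∃ i, x i = 0 ∨ x i = R}

/-- The boundary integral `∫_{∂Q} h ∂u/∂n ds` over the boundary of the cube `[0,R]³`: the sum
over `i = 1,2,3` of the integral of `h·∂u/∂zᵢ` over the face `{zᵢ = R}` minus the corresponding
integral over the face `{zᵢ = 0}`, each face integral being a double integral over `[0,R]²`. -/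
def bdryInt (R : ℝ) (u h : E3 → ℝ) : ℝ :=
  ∑ i : Fin 3,
    ((∫ p in Set.Icc (0:ℝ) R ×ˢ Set.Icc (0:ℝ) R,
        h (facePt i R p) * fderiv ℝ u (facePt i R p) (EuclideanSpace.single i 1)) -
     ∫ p in Set.Icc (0:ℝ) R ×ˢ Set.Icc (0:ℝ) R,
        h (facePt i 0 p) * fderiv ℝ u (facePt i 0 p) (EuclideanSpace.single i 1))

/-- The normalized Dirichlet eigenfunctions
`u_m(x) = √(8/R³)·sin(πm₁x₁/R)·sin(πm₂x₂/R)·sin(πm₃x₃/R)` of the cube `[0,R]³`. -/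
def um (R : ℝ) (m : Fin 3 → ℕ) (x : E3) : ℝ :=
  Real.sqrt (8 / R ^ 3) * (Real.sin (π * m 0 * x 0 / R) * Real.sin (π * m 1 * x 1 / R) *
    Real.sin (π * m 2 * x 2 / R))

/-- The Dirichlet frequencies `λ_m = (π/R)·√(m₁² + m₂² + m₃²)` of the cube `[0,R]³`. -/
def lamm (R : ℝ) (m : Fin 3 → ℕ) : ℝ :=
  (π / R) * Real.sqrt ((m 0 : ℝ) ^ 2 + (m 1 : ℝ) ^ 2 + (m 2 : ℝ) ^ 2)

/-- The coefficients `α_m = ∫_{∂Q} I_m(z) · (∂u_m/∂n)(z) ds(z)`, where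
`I_m(z) = ∫₀^∞ g(z,r) · cos(λ_m r)/(4πr) dr` and `g` are the spherical integrals of `f`. -/
def alphaCoeff (R : ℝ) (f : E3 → ℝ) (m : Fin 3 → ℕ) : ℝ :=
  bdryInt R (um R m)
    (fun z => ∫ r in Set.Ioi (0:ℝ), sphInt f z r * (Real.cos (lamm R m * r) / (4 * π * r)))

set_option maxHeartbeats 1000000 in
/-! ### Auxiliary: one-variable calculus for the Helmholtz kernel -/

def phiF (L s : ℝ) : ℝ := Real.cos (L * Real.sqrt s) / (4 * π * Real.sqrt s)

def phi1 (L s : ℝ) : ℝ :=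
  -(L * Real.sin (L * Real.sqrt s) / (8 * π * s)) -
    Real.cos (L * Real.sqrt s) / (8 * π * s * Real.sqrt s)

def phi2 (L s : ℝ) : ℝ :=
  -(L ^ 2 * Real.cos (L * Real.sqrt s) / (16 * π * s * Real.sqrt s)) +
    L * Real.sin (L * Real.sqrt s) / (8 * π * s ^ 2) +
    L * Real.sin (L * Real.sqrt s) / (16 * π * s ^ 2) +
    3 * Real.cos (L * Real.sqrt s) / (16 * π * s ^ 2 * Real.sqrt s)

theorem phi_ode {L s : ℝ} (hs : 0 < s) :
    4 * s * phi2 L s + 6 * phi1 L s = -(L ^ 2) * phiF L s := by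
  obtain ⟨r, hr, rfl⟩ : ∃ r, 0 < r ∧ s = r ^ 2 :=
    ⟨Real.sqrt s, Real.sqrt_pos.2 hs, (Real.sq_sqrt hs.le).symm⟩
  have hq : Real.sqrt (r ^ 2) = r := Real.sqrt_sq hr.le
  have hpi : (π : ℝ) ≠ 0 := Real.pi_ne_zero
  have hrne : r ≠ 0 := hr.ne'
  unfold phi2 phi1 phiF
  rw [hq]
  field_simp
  ring

theorem phiF_hasDeriv {L s : ℝ} (hs : 0 < s) : HasDerivAt (phiF L) (phi1 L s) s := by
  have h0 : Real.sqrt s ≠ 0 := by positivity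
  have hr : HasDerivAt Real.sqrt (1 / (2 * Real.sqrt s)) s := Real.hasDerivAt_sqrt hs.ne'
  have hN : HasDerivAt (fun t => Real.cos (L * Real.sqrt t))
      (-Real.sin (L * Real.sqrt s) * (L * (1 / (2 * Real.sqrt s)))) s :=
    (hr.const_mul L).cos
  have hD : HasDerivAt (fun t => 4 * π * Real.sqrt t) (4 * π * (1 / (2 * Real.sqrt s))) s :=
    hr.const_mul _
  have hDne : 4 * π * Real.sqrt s ≠ 0 := by positivity
  have H := hN.div hD hDne
  refine H.congr_deriv ?_
  unfold phi1
  obtain ⟨r, hrp, rfl⟩ : ∃ r, 0 < r ∧ s = r ^ 2 :=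
    ⟨Real.sqrt s, Real.sqrt_pos.2 hs, (Real.sq_sqrt hs.le).symm⟩
  have hq : Real.sqrt (r ^ 2) = r := Real.sqrt_sq hrp.le
  have hpi : (π : ℝ) ≠ 0 := Real.pi_ne_zero
  have hrne : r ≠ 0 := hrp.ne'
  rw [hq]
  field_simp
  ring

theorem phi1_hasDeriv {L s : ℝ} (hs : 0 < s) : HasDerivAt (phi1 L) (phi2 L s) s := by
  have h0 : Real.sqrt s ≠ 0 := by positivity
  have hr : HasDerivAt Real.sqrt (1 / (2 * Real.sqrt s)) s := Real.hasDerivAt_sqrt hs.ne'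
  have hsin : HasDerivAt (fun t => Real.sin (L * Real.sqrt t))
      (Real.cos (L * Real.sqrt s) * (L * (1 / (2 * Real.sqrt s)))) s := (hr.const_mul L).sin
  have hcos : HasDerivAt (fun t => Real.cos (L * Real.sqrt t))
      (-Real.sin (L * Real.sqrt s) * (L * (1 / (2 * Real.sqrt s)))) s := (hr.const_mul L).cos
  have hD1 : HasDerivAt (fun t : ℝ => 8 * π * t) (8 * π) s := by
    simpa using (hasDerivAt_id s).const_mul (8 * π)
  have hD2 := hD1.mul hr
  have hD1ne : 8 * π * s ≠ 0 := by positivity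
  have hD2ne : 8 * π * s * Real.sqrt s ≠ 0 := by positivity
  have hA := ((hsin.const_mul L).div hD1 hD1ne).neg
  have hB := hcos.div hD2 hD2ne
  have H : HasDerivAt (phi1 L) _ s := hA.sub hB
  convert H using 1
  unfold phi2
  simp only [Pi.mul_apply]
  obtain ⟨r, hrp, rfl⟩ : ∃ r, 0 < r ∧ s = r ^ 2 :=
    ⟨Real.sqrt s, Real.sqrt_pos.2 hs, (Real.sq_sqrt hs.le).symm⟩
  have hq : Real.sqrt (r ^ 2) = r := Real.sqrt_sq hrp.le
  have hpi : (π : ℝ) ≠ 0 := Real.pi_ne_zero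
  have hrne : r ≠ 0 := hrp.ne'
  rw [hq]
  field_simp
  ring

/-! ### Auxiliary: derivatives of the kernel on `E3` -/

def qF (x z : E3) : ℝ := ‖z - x‖ ^ 2
def PhiF (L : ℝ) (x z : E3) : ℝ := phiF L (qF x z)
def GiF (L : ℝ) (x : E3) (i : Fin 3) (z : E3) : ℝ := 2 * phi1 L (qF x z) * ((z - x) i)
def DPhi (L : ℝ) (x z : E3) : E3 →L[ℝ] ℝ := (2 * phi1 L (qF x z)) • innerSL ℝ (z - x)
def DGi (L : ℝ) (x : E3) (i : Fin 3) (z : E3) : E3 →L[ℝ] ℝ :=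
  (4 * phi2 L (qF x z) * ((z - x) i)) • innerSL ℝ (z - x) +
    (2 * phi1 L (qF x z)) • innerSL ℝ (EuclideanSpace.single i (1:ℝ))

theorem qF_pos {x z : E3} (h : z ≠ x) : 0 < qF x z := by
  have h1 : z - x ≠ 0 := sub_ne_zero.2 h
  have h2 : 0 < ‖z - x‖ := norm_pos_iff.2 h1
  exact pow_pos h2 2

theorem hasFDerivAt_qF (x z : E3) :
    HasFDerivAt (qF x) ((2:ℕ) • (innerSL ℝ (z - x))) z := by
  have h : HasFDerivAt (fun z : E3 => z - x) (ContinuousLinearMap.id ℝ E3) z :=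
    (hasFDerivAt_id z).sub_const x
  refine h.norm_sq.congr_fderiv ?_
  simp

theorem PhiF_eq (L : ℝ) (x z : E3) :
    PhiF L x z = Real.cos (L * ‖x - z‖) / (4 * π * ‖x - z‖) := by
  rw [PhiF, phiF, qF, Real.sqrt_sq (norm_nonneg _), norm_sub_rev]

theorem hasFDerivAt_PhiF {L : ℝ} {x z : E3} (h : z ≠ x) :
    HasFDerivAt (PhiF L x) (DPhi L x z) z := by
  have H := (phiF_hasDeriv (L := L) (qF_pos h)).comp_hasFDerivAt z (hasFDerivAt_qF x z)
  refine H.congr_fderiv ?_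
  ext v
  simp [DPhi, mul_comm, mul_assoc, mul_left_comm]

theorem hasFDerivAt_coord (x : E3) (i : Fin 3) (z : E3) :
    HasFDerivAt (fun z : E3 => (z - x) i) (innerSL ℝ (EuclideanSpace.single i (1:ℝ))) z := by
  have key : (fun z : E3 => (z - x) i)
      = fun z : E3 => (innerSL ℝ (EuclideanSpace.single i (1:ℝ))) (z - x) := by
    ext w
    simp [EuclideanSpace.inner_single_left]
  rw [key]
  have h := ((innerSL ℝ (EuclideanSpace.single i (1:ℝ))).hasFDerivAt).comp z
    ((hasFDerivAt_id z).sub_const x)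
  exact h.congr_fderiv (by simp)

theorem hasFDerivAt_GiF {L : ℝ} {x : E3} {i : Fin 3} {z : E3} (h : z ≠ x) :
    HasFDerivAt (GiF L x i) (DGi L x i z) z := by
  have h1 : HasFDerivAt (fun z : E3 => phi1 L (qF x z))
      (phi2 L (qF x z) • ((2:ℕ) • (innerSL ℝ (z - x)))) z :=
    (phi1_hasDeriv (qF_pos h)).comp_hasFDerivAt z (hasFDerivAt_qF x z)
  have h2 := ((h1.const_mul 2).mul (hasFDerivAt_coord x i z))
  refine h2.congr_fderiv ?_
  ext v
  simp [DGi, GiF]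
  ring

theorem qF_sum (x z : E3) : ∑ i : Fin 3, ((z - x) i) ^ 2 = qF x z := by
  rw [qF, EuclideanSpace.norm_eq, Real.sq_sqrt (by positivity)]
  refine Finset.sum_congr rfl fun i _ => ?_
  rw [Real.norm_eq_abs, sq_abs]

theorem DPhi_single (L : ℝ) (x z : E3) (i : Fin 3) :
    DPhi L x z (EuclideanSpace.single i (1:ℝ)) = GiF L x i z := by
  simp [DPhi, GiF, EuclideanSpace.inner_single_right, real_inner_comm]

theorem sum_DGi {L : ℝ} {x z : E3} (h : z ≠ x) :
    ∑ i : Fin 3, DGi L x i z (EuclideanSpace.single i (1:ℝ)) = -(L ^ 2) * PhiF L x z := by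
  have key : ∀ i : Fin 3, DGi L x i z (EuclideanSpace.single i (1:ℝ))
      = 4 * phi2 L (qF x z) * ((z - x) i) ^ 2 + 2 * phi1 L (qF x z) := by
    intro i
    simp [DGi, EuclideanSpace.inner_single_right, EuclideanSpace.inner_single_left,
      EuclideanSpace.single_apply]
    ring
  simp only [key]
  rw [Finset.sum_add_distrib, ← Finset.mul_sum]
  have h3 : ∑ _i : Fin 3, 2 * phi1 L (qF x z) = 6 * phi1 L (qF x z) := by
    simp [Finset.sum_const]; ring
  rw [h3]
  have hode := phi_ode (L := L) (qF_pos h)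
  have hq := qF_sum x z
  rw [PhiF, hq]
  linarith [hode]

/-! ### Auxiliary: derivatives of `u` -/

section U
variable {u : E3 → ℝ} {V : Set E3} (hV : IsOpen V) (hu : ContDiffOn ℝ 2 u V)
include hV hu

def Dui (u : E3 → ℝ) (i : Fin 3) (z : E3) : E3 →L[ℝ] ℝ :=
  (ContinuousLinearMap.apply ℝ ℝ (EuclideanSpace.single i (1:ℝ))).comp
    (fderiv ℝ (fderiv ℝ u) z)

theorem hasFDerivAt_u {z : E3} (hz : z ∈ V) : HasFDerivAt u (fderiv ℝ u z) z := by
  have h := (hu.contDiffAt (hV.mem_nhds hz)).differentiableAt (by norm_num)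
  exact h.hasFDerivAt

theorem hasFDerivAt_fderiv_u {z : E3} (hz : z ∈ V) :
    HasFDerivAt (fderiv ℝ u) (fderiv ℝ (fderiv ℝ u) z) z := by
  have h1 : ContDiffAt ℝ 2 u z := hu.contDiffAt (hV.mem_nhds hz)
  have h2 : ContDiffAt ℝ 1 (fderiv ℝ u) z := h1.fderiv_right (by norm_num)
  exact (h2.differentiableAt (by norm_num)).hasFDerivAt

theorem hasFDerivAt_ui {z : E3} (hz : z ∈ V) (i : Fin 3) :
    HasFDerivAt (fun y => fderiv ℝ u y (EuclideanSpace.single i (1:ℝ))) (Dui u i z) z :=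
  (ContinuousLinearMap.apply ℝ ℝ (EuclideanSpace.single i (1:ℝ))).hasFDerivAt.comp z
    (hasFDerivAt_fderiv_u hV hu hz)

theorem lap_eq {z : E3} (hz : z ∈ V) :
    lap u z = ∑ i : Fin 3, Dui u i z (EuclideanSpace.single i (1:ℝ)) := by
  refine Finset.sum_congr rfl fun i _ => ?_
  rw [(hasFDerivAt_ui hV hu hz i).fderiv]

theorem continuousOn_ui (i : Fin 3) :
    ContinuousOn (fun y => fderiv ℝ u y (EuclideanSpace.single i (1:ℝ))) V := by
  have h := hu.continuousOn_fderiv_of_isOpen hV (by norm_num)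
  exact (ContinuousLinearMap.apply ℝ ℝ
    (EuclideanSpace.single i (1:ℝ))).continuous.comp_continuousOn h

end U

/-! ### The vector field and its derivative -/

def Fv (L : ℝ) (x : E3) (u : E3 → ℝ) (i : Fin 3) (z : E3) : ℝ :=
  PhiF L x z * fderiv ℝ u z (EuclideanSpace.single i (1:ℝ)) - u z * GiF L x i z

def Fd (L : ℝ) (x : E3) (u : E3 → ℝ) (i : Fin 3) (z : E3) : E3 →L[ℝ] ℝ :=
  (PhiF L x z • Dui u i z + fderiv ℝ u z (EuclideanSpace.single i (1:ℝ)) • DPhi L x z) -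
    (u z • DGi L x i z + GiF L x i z • fderiv ℝ u z)

theorem hasFDerivAt_Fv {L : ℝ} {x : E3} {u : E3 → ℝ} {V : Set E3} (hV : IsOpen V)
    (hu : ContDiffOn ℝ 2 u V) {z : E3} (hzV : z ∈ V) (hzx : z ≠ x) (i : Fin 3) :
    HasFDerivAt (Fv L x u i) (Fd L x u i z) z :=
  ((hasFDerivAt_PhiF hzx).mul (hasFDerivAt_ui hV hu hzV i)).sub
    ((hasFDerivAt_u hV hu hzV).mul (hasFDerivAt_GiF hzx))

theorem divergence_Fd {L : ℝ} {x : E3} {u : E3 → ℝ} {V : Set E3} (hV : IsOpen V)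
    (hu : ContDiffOn ℝ 2 u V) {z : E3} (hzV : z ∈ V) (hzx : z ≠ x)
    (hHelm : lap u z + L ^ 2 * u z = 0) :
    ∑ i : Fin 3, Fd L x u i z (EuclideanSpace.single i (1:ℝ)) = 0 := by
  have expand : ∀ i : Fin 3, Fd L x u i z (EuclideanSpace.single i (1:ℝ))
      = PhiF L x z * Dui u i z (EuclideanSpace.single i (1:ℝ))
        - u z * DGi L x i z (EuclideanSpace.single i (1:ℝ)) := by
    intro i
    have hd := DPhi_single L x z i
    simp only [Fd, ContinuousLinearMap.sub_apply, ContinuousLinearMap.add_apply,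
      ContinuousLinearMap.smul_apply, smul_eq_mul, hd]
    ring
  simp only [expand]
  rw [Finset.sum_sub_distrib, ← Finset.mul_sum, ← Finset.mul_sum,
    ← lap_eq hV hu hzV, sum_DGi hzx]
  have hl : lap u z = -(L ^ 2 * u z) := by linarith
  rw [hl]
  ring

/-! ### Membership and geometry lemmas -/

theorem cube_ne {R : ℝ} {x z : E3} (hx : x ∉ cube R) (hz : z ∈ cube R) : z ≠ x :=
  fun h => hx (h ▸ hz)

theorem continuousOn_Fv {L : ℝ} {x : E3} {u : E3 → ℝ} {V : Set E3} (hV : IsOpen V)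
    (hu : ContDiffOn ℝ 2 u V) (i : Fin 3) :
    ContinuousOn (Fv L x u i) (V ∩ {x}ᶜ) := by
  have hW : IsOpen (V ∩ {x}ᶜ) := hV.inter (isOpen_compl_singleton)
  have hΦ : ContinuousOn (PhiF L x) (V ∩ {x}ᶜ) := fun z hz =>
    ((hasFDerivAt_PhiF (by simpa using hz.2 : z ≠ x)).differentiableAt.continuousAt).continuousWithinAt
  have hG : ContinuousOn (GiF L x i) (V ∩ {x}ᶜ) := fun z hz =>
    ((hasFDerivAt_GiF (by simpa using hz.2 : z ≠ x)).differentiableAt.continuousAt).continuousWithinAt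
  have hui : ContinuousOn (fun y => fderiv ℝ u y (EuclideanSpace.single i (1:ℝ)))
      (V ∩ {x}ᶜ) := (continuousOn_ui hV hu i).mono Set.inter_subset_left
  have huc : ContinuousOn u (V ∩ {x}ᶜ) := hu.continuousOn.mono Set.inter_subset_left
  exact (hΦ.mul hui).sub (huc.mul hG)

def toE : (Fin 3 → ℝ) ≃L[ℝ] E3 := (EuclideanSpace.equiv (Fin 3) ℝ).symm

theorem insertNth_face0 (c : ℝ) (p : ℝ × ℝ) :
    toE (Fin.insertNth 0 c (MeasurableEquiv.finTwoArrow.symm p)) = facePt 0 c p := by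
  refine PiLp.ext fun j => ?_
  fin_cases j <;>
    simp [toE, facePt, EuclideanSpace.single_apply, MeasurableEquiv.finTwoArrow,
      Fin.insertNth, Fin.succAboveCases] <;> rfl

theorem insertNth_face1 (c : ℝ) (p : ℝ × ℝ) :
    toE (Fin.insertNth 1 c (MeasurableEquiv.finTwoArrow.symm p)) = facePt 1 c (p.2, p.1) := by
  refine PiLp.ext fun j => ?_
  fin_cases j <;>
    simp [toE, facePt, EuclideanSpace.single_apply, MeasurableEquiv.finTwoArrow,
      Fin.insertNth, Fin.succAboveCases] <;> rfl

theorem insertNth_face2 (c : ℝ) (p : ℝ × ℝ) :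
    toE (Fin.insertNth 2 c (MeasurableEquiv.finTwoArrow.symm p)) = facePt 2 c p := by
  refine PiLp.ext fun j => ?_
  fin_cases j <;>
    simp [toE, facePt, EuclideanSpace.single_apply, MeasurableEquiv.finTwoArrow,
      Fin.insertNth, Fin.succAboveCases] <;> rfl

theorem intIcc2 (R : ℝ) (g : (Fin 2 → ℝ) → ℝ) :
    ∫ y in Set.Icc (0 : Fin 2 → ℝ) (fun _ => R), g y
      = ∫ p in Set.Icc (0:ℝ) R ×ˢ Set.Icc (0:ℝ) R, g (MeasurableEquiv.finTwoArrow.symm p) := by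
  have hmp : MeasurePreserving (MeasurableEquiv.finTwoArrow.symm : ℝ × ℝ → (Fin 2 → ℝ))
      volume volume := (volume_preserving_finTwoArrow ℝ).symm _
  have hemb : MeasurableEmbedding (MeasurableEquiv.finTwoArrow.symm : ℝ × ℝ → (Fin 2 → ℝ)) :=
    MeasurableEquiv.finTwoArrow.symm.measurableEmbedding
  have hpre : (MeasurableEquiv.finTwoArrow.symm : ℝ × ℝ → (Fin 2 → ℝ)) ⁻¹'
      (Set.Icc (0 : Fin 2 → ℝ) (fun _ => R)) = Set.Icc (0:ℝ) R ×ˢ Set.Icc (0:ℝ) R := by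
    ext p
    simp only [Set.mem_preimage, Set.mem_Icc, Set.mem_prod, Pi.le_def,
      MeasurableEquiv.finTwoArrow, MeasurableEquiv.coe_mk]
    constructor
    · rintro ⟨h1, h2⟩
      exact ⟨⟨by simpa using h1 0, by simpa using h2 0⟩, ⟨by simpa using h1 1, by simpa using h2 1⟩⟩
    · rintro ⟨⟨a1, a2⟩, b1, b2⟩
      constructor <;> intro j <;> fin_cases j <;> simpa
  rw [← hmp.setIntegral_preimage_emb hemb, hpre]

theorem intswap (R : ℝ) (H : ℝ × ℝ → ℝ) :
    ∫ p in Set.Icc (0:ℝ) R ×ˢ Set.Icc (0:ℝ) R, H (p.2, p.1)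
      = ∫ p in Set.Icc (0:ℝ) R ×ˢ Set.Icc (0:ℝ) R, H p := by
  have hmp : MeasurePreserving (Prod.swap : ℝ × ℝ → ℝ × ℝ) volume volume := by
    rw [MeasureTheory.Measure.volume_eq_prod]
    exact MeasureTheory.Measure.measurePreserving_swap
  have hemb : MeasurableEmbedding (Prod.swap : ℝ × ℝ → ℝ × ℝ) :=
    MeasurableEquiv.prodComm.measurableEmbedding
  have hpre : (Prod.swap : ℝ × ℝ → ℝ × ℝ) ⁻¹' (Set.Icc (0:ℝ) R ×ˢ Set.Icc (0:ℝ) R)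
      = Set.Icc (0:ℝ) R ×ˢ Set.Icc (0:ℝ) R := by
    ext p
    simp only [Set.mem_preimage, Set.mem_prod, Prod.fst_swap, Prod.snd_swap]
    tauto
  have h := hmp.setIntegral_preimage_emb hemb H (Set.Icc (0:ℝ) R ×ˢ Set.Icc (0:ℝ) R)
  rw [hpre] at h
  simpa [Prod.swap] using h

theorem facePt_mem_cube {R c : ℝ} {p : ℝ × ℝ} (i : Fin 3) (hc : c ∈ Set.Icc 0 R)
    (h1 : p.1 ∈ Set.Icc 0 R) (h2 : p.2 ∈ Set.Icc 0 R) : facePt i c p ∈ cube R := by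
  intro j
  fin_cases i <;> fin_cases j <;>
    simpa [facePt, EuclideanSpace.single_apply] using (by first | exact hc | exact h1 | exact h2)

theorem facePt_apply_self (i : Fin 3) (c : ℝ) (p : ℝ × ℝ) : facePt i c p i = c := by
  fin_cases i <;> simp [facePt, EuclideanSpace.single_apply]

theorem facePt_mem_bdry {R c : ℝ} {p : ℝ × ℝ} (i : Fin 3) (hc0 : c = 0 ∨ c = R)
    (hc : c ∈ Set.Icc 0 R) (h1 : p.1 ∈ Set.Icc 0 R) (h2 : p.2 ∈ Set.Icc 0 R) :
    facePt i c p ∈ cubeBdry R :=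
  ⟨facePt_mem_cube i hc h1 h2, i, by rw [facePt_apply_self]; tauto⟩

/-- for points outside the closed cube, the Helmholtz boundary integral of a
Dirichlet eigenfunction of the cube vanishes. -/
theorem helmholtz_representation_cube_exterior (R lam : ℝ) (hR : 0 < R) (u : E3 → ℝ)
    (V : Set E3) (hV : IsOpen V) (hQV : cube R ⊆ V) (hu : ContDiffOn ℝ 2 u V)
    (hHelm : ∀ x ∈ cube R, lap u x + lam ^ 2 * u x = 0)
    (hbd : ∀ z ∈ cubeBdry R, u z = 0) :
    ∀ x : E3, x ∉ cube R →
      bdryInt R u (fun z => Real.cos (lam * ‖x - z‖) / (4 * π * ‖x - z‖)) = 0 := by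
  intro x hx
  set L := lam with hLdef
  set b : Fin 3 → ℝ := fun _ => R with hb
  have hle : (0 : Fin 3 → ℝ) ≤ b := fun i => by simp [hb, hR.le]
  have hIccCube : ∀ y : Fin 3 → ℝ, y ∈ Set.Icc (0 : Fin 3 → ℝ) b → toE y ∈ cube R := by
    intro y hy i
    exact ⟨hy.1 i, hy.2 i⟩
  have hQW : ∀ z ∈ cube R, z ∈ V ∩ {x}ᶜ := fun z hz =>
    ⟨hQV hz, by simpa using cube_ne hx hz⟩
  -- divergence theorem
  have key := MeasureTheory.integral_divergence_of_hasFDerivAt_off_countable'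
    (0 : Fin 3 → ℝ) b hle (fun i y => Fv L x u i (toE y))
    (fun i y => (Fd L x u i (toE y)).comp (toE : (Fin 3 → ℝ) →L[ℝ] E3))
    ∅ Set.countable_empty
    (fun i => (continuousOn_Fv hV hu i).comp (toE.continuous.continuousOn)
      (fun y hy => hQW _ (hIccCube y hy)))
    (fun y hy i => by
      have hyc : toE y ∈ cube R := fun j => ⟨(hy.1 j (Set.mem_univ j)).1.le,
        (hy.1 j (Set.mem_univ j)).2.le⟩
      exact (hasFDerivAt_Fv hV hu (hQV hyc) (cube_ne hx hyc) i).comp y toE.hasFDerivAt)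
    (by
      -- integrability of the (zero) divergence
      have heq : Set.EqOn (fun y => ∑ i : Fin 3,
          ((Fd L x u i (toE y)).comp (toE : (Fin 3 → ℝ) →L[ℝ] E3)) (Pi.single i 1))
          (fun _ => (0:ℝ)) (Set.Icc (0 : Fin 3 → ℝ) b) := by
        intro y hy
        have hyc := hIccCube y hy
        simpa [show ∀ i : Fin 3, toE (Pi.single i 1) = EuclideanSpace.single i (1:ℝ) from
          fun i => rfl] using divergence_Fd hV hu (hQV hyc) (cube_ne hx hyc) (hHelm _ hyc)
      exact (integrableOn_congr_fun heq measurableSet_Icc).2 (integrableOn_zero))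
  -- LHS is zero
  have hLHS : (∫ y in Set.Icc (0 : Fin 3 → ℝ) b, ∑ i : Fin 3,
      ((Fd L x u i (toE y)).comp (toE : (Fin 3 → ℝ) →L[ℝ] E3)) (Pi.single i 1)) = 0 := by
    rw [setIntegral_congr_fun measurableSet_Icc (fun y hy => ?_)]
    · exact integral_zero _ _
    · have hyc := hIccCube y hy
      show _ = (0:ℝ)
      simpa [show ∀ i : Fin 3, toE (Pi.single i 1) = EuclideanSpace.single i (1:ℝ) from
          fun i => rfl] using divergence_Fd hV hu (hQV hyc) (cube_ne hx hyc) (hHelm _ hyc)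
  rw [hLHS] at key
  -- face integral conversion
  have hmeas : MeasurableSet (Set.Icc (0:ℝ) R ×ˢ Set.Icc (0:ℝ) R) :=
    measurableSet_Icc.prod measurableSet_Icc
  have hcmem : ∀ c : ℝ, c = 0 ∨ c = R → c ∈ Set.Icc (0:ℝ) R := by
    rintro c (rfl | rfl)
    · exact ⟨le_rfl, hR.le⟩
    · exact ⟨hR.le, le_rfl⟩
  have hFveq : ∀ (i : Fin 3) (c : ℝ), c = 0 ∨ c = R →
      ∀ q ∈ Set.Icc (0:ℝ) R ×ˢ Set.Icc (0:ℝ) R,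
        Fv L x u i (facePt i c q)
          = Real.cos (L * ‖x - facePt i c q‖) / (4 * π * ‖x - facePt i c q‖) *
              fderiv ℝ u (facePt i c q) (EuclideanSpace.single i 1) := by
    intro i c hc0 q hq
    have hbdq : facePt i c q ∈ cubeBdry R := facePt_mem_bdry i hc0 (hcmem c hc0) hq.1 hq.2
    rw [Fv, hbd _ hbdq, PhiF_eq]
    ring
  have hF0 : ∀ c : ℝ, c = 0 ∨ c = R →
      (∫ y in Set.Icc ((0 : Fin 3 → ℝ) ∘ (0:Fin 3).succAbove) (b ∘ (0:Fin 3).succAbove),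
        Fv L x u 0 (toE (Fin.insertNth 0 c y)))
      = ∫ p in Set.Icc (0:ℝ) R ×ˢ Set.Icc (0:ℝ) R,
          Real.cos (L * ‖x - facePt 0 c p‖) / (4 * π * ‖x - facePt 0 c p‖) *
            fderiv ℝ u (facePt 0 c p) (EuclideanSpace.single 0 1) := by
    intro c hc0
    show (∫ y in Set.Icc (0 : Fin 2 → ℝ) (fun _ => R), Fv L x u 0 (toE (Fin.insertNth 0 c y))) = _
    rw [intIcc2]
    exact setIntegral_congr_fun hmeas fun p hp => by
      rw [insertNth_face0]; exact hFveq 0 c hc0 p hp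
  have hF1 : ∀ c : ℝ, c = 0 ∨ c = R →
      (∫ y in Set.Icc ((0 : Fin 3 → ℝ) ∘ (1:Fin 3).succAbove) (b ∘ (1:Fin 3).succAbove),
        Fv L x u 1 (toE (Fin.insertNth 1 c y)))
      = ∫ p in Set.Icc (0:ℝ) R ×ˢ Set.Icc (0:ℝ) R,
          Real.cos (L * ‖x - facePt 1 c p‖) / (4 * π * ‖x - facePt 1 c p‖) *
            fderiv ℝ u (facePt 1 c p) (EuclideanSpace.single 1 1) := by
    intro c hc0
    show (∫ y in Set.Icc (0 : Fin 2 → ℝ) (fun _ => R), Fv L x u 1 (toE (Fin.insertNth 1 c y))) = _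
    rw [intIcc2]
    rw [setIntegral_congr_fun hmeas (g := fun p : ℝ × ℝ =>
      (fun q : ℝ × ℝ => Real.cos (L * ‖x - facePt 1 c q‖) / (4 * π * ‖x - facePt 1 c q‖) *
        fderiv ℝ u (facePt 1 c q) (EuclideanSpace.single 1 1)) (p.2, p.1)) (fun p hp => by
      rw [insertNth_face1]; exact hFveq 1 c hc0 (p.2, p.1) ⟨hp.2, hp.1⟩)]
    exact intswap R (fun q : ℝ × ℝ =>
      Real.cos (L * ‖x - facePt 1 c q‖) / (4 * π * ‖x - facePt 1 c q‖) *
        fderiv ℝ u (facePt 1 c q) (EuclideanSpace.single 1 1))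
  have hF2 : ∀ c : ℝ, c = 0 ∨ c = R →
      (∫ y in Set.Icc ((0 : Fin 3 → ℝ) ∘ (2:Fin 3).succAbove) (b ∘ (2:Fin 3).succAbove),
        Fv L x u 2 (toE (Fin.insertNth 2 c y)))
      = ∫ p in Set.Icc (0:ℝ) R ×ˢ Set.Icc (0:ℝ) R,
          Real.cos (L * ‖x - facePt 2 c p‖) / (4 * π * ‖x - facePt 2 c p‖) *
            fderiv ℝ u (facePt 2 c p) (EuclideanSpace.single 2 1) := by
    intro c hc0
    show (∫ y in Set.Icc (0 : Fin 2 → ℝ) (fun _ => R), Fv L x u 2 (toE (Fin.insertNth 2 c y))) = _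
    rw [intIcc2]
    exact setIntegral_congr_fun hmeas fun p hp => by
      rw [insertNth_face2]; exact hFveq 2 c hc0 p hp
  -- assemble
  rw [bdryInt, Fin.sum_univ_three]
  rw [show (∑ i : Fin 3, ((∫ y in Set.Icc ((0:Fin 3 → ℝ) ∘ i.succAbove) (b ∘ i.succAbove),
      Fv L x u i (toE (i.insertNth (b i) y))) -
      ∫ y in Set.Icc ((0:Fin 3 → ℝ) ∘ i.succAbove) (b ∘ i.succAbove),
      Fv L x u i (toE (i.insertNth ((0:Fin 3 → ℝ) i) y)))) = _ from Fin.sum_univ_three _] at key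
  simp only [Pi.zero_apply, hb] at key
  rw [hF0 R (Or.inr rfl), hF0 0 (Or.inl rfl), hF1 R (Or.inr rfl), hF1 0 (Or.inl rfl),
    hF2 R (Or.inr rfl), hF2 0 (Or.inl rfl)] at key
  linarith [key]
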